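/- Let P be a finite set of ports. (i) For every fPCL formula ζ over P there effectively exists an fPCL formula ζ' in normal form with ζ ≡ ζ' (equivalence over every De Morgan algebra). (ii) For every Kleene algebra K and every fPCL formula ζ over P there effectively exists an fPCL formula ζ' in normal form with ζ ≡_K ζ'. (iii) For every Boolean algebra B and every fPCL formula ζ over P there effectively exists an fPCL formula ζ' in normal form with ζ ≡_B ζ'. -/

import Mathlib

/-- A De Morgan algebra: a bounded distributive lattice equipped with a
complement map satisfying involution and the De Morgan laws. -/
class DeMorganAlg (K : Type) extends DistribLattice K, BoundedOrder K where
  compl : K → K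
  compl_compl : ∀ k : K, compl (compl k) = k
  compl_sup : ∀ k k' : K, compl (k ⊔ k') = compl k ⊓ compl k'
  compl_inf : ∀ k k' : K, compl (k ⊓ k') = compl k ⊔ compl k'

/-- fPIL formulas over the set of ports `P`. -/
inductive fPIL (P : Type) : Type where
  | tt : fPIL P
  | port : P → fPIL P
  | fnot : fPIL P → fPIL P
  | fdisj : fPIL P → fPIL P → fPIL P

/-- Fuzzy conjunction of fPIL formulas. -/
def fPIL.fconj {P : Type} (φ₁ φ₂ : fPIL P) : fPIL P :=
  .fnot (.fdisj (.fnot φ₁) (.fnot φ₂))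

/-- The fPIL formula `false`. -/
def fPIL.ff {P : Type} : fPIL P := .fnot .tt

/-- K-fuzzy interactions on `P`: maps `a : P → K` with `a p ≠ 0` for some port `p`. -/
def fI (P K : Type) [DeMorganAlg K] : Type := {a : P → K // ∃ p : P, a p ≠ ⊥}

/-- Semantics of fPIL formulas. -/
def fPIL.sem {P K : Type} [DeMorganAlg K] : fPIL P → fI P K → K
  | .tt, _ => ⊤
  | .port p, a => a.1 p
  | .fnot φ, a => DeMorganAlg.compl (φ.sem a)
  | .fdisj φ₁ φ₂, a => φ₁.sem a ⊔ φ₂.sem a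

/-- Equivalence of fPIL formulas: equal semantics over every De Morgan algebra
and every fuzzy interaction. -/
def pilEquiv {P : Type} (φ₁ φ₂ : fPIL P) : Prop :=
  ∀ (K : Type) [DeMorganAlg K] (a : fI P K), φ₁.sem a = φ₂.sem a
noncomputable instance {P K : Type} [DeMorganAlg K] : DecidableEq (fI P K) :=
  Classical.decEq _

/-- fPCL formulas over the set of ports `P`. -/
inductive fPCL (P : Type) : Type where
  | pil : fPIL P → fPCL P
  | cneg : fPCL P → fPCL P
  | oplus : fPCL P → fPCL P → fPCL P
  | coal : fPCL P → fPCL P → fPCL P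

/-- Fuzzy conjunction `⊗` of fPCL formulas. -/
def fPCL.otimes {P : Type} (ζ₁ ζ₂ : fPCL P) : fPCL P :=
  .cneg (.oplus (.cneg ζ₁) (.cneg ζ₂))

/-- The closure operator `~ζ := ζ ⊎ true`. -/
def fPCL.closure {P : Type} (ζ : fPCL P) : fPCL P := .coal ζ (.pil .tt)

/-- Semantics of fPCL formulas on finite sets of fuzzy interactions. -/
noncomputable def fPCL.sem {P K : Type} [DeMorganAlg K] :
    fPCL P → Finset (fI P K) → K
  | .pil φ, γ => γ.inf fun a => φ.sem a
  | .cneg ζ, γ => DeMorganAlg.compl (ζ.sem γ)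
  | .oplus ζ₁ ζ₂, γ => ζ₁.sem γ ⊔ ζ₂.sem γ
  | .coal ζ₁ ζ₂, γ =>
      ((γ.powerset ×ˢ γ.powerset).filter fun q =>
          q.1.Nonempty ∧ q.2.Nonempty ∧ q.1 ∪ q.2 = γ).sup fun q =>
        ζ₁.sem q.1 ⊓ ζ₂.sem q.2

/-- Equivalence of fPCL formulas: equal semantics over every De Morgan algebra
and every nonempty finite set of fuzzy interactions. -/
def pclEquiv {P : Type} (ζ₁ ζ₂ : fPCL P) : Prop :=
  ∀ (K : Type) [DeMorganAlg K] (γ : Finset (fI P K)), γ.Nonempty →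
    ζ₁.sem γ = ζ₂.sem γ
/-- A Kleene algebra: a De Morgan algebra satisfying `k₁ ⊓ k̄₁ ≤ k₂ ⊔ k̄₂`. -/
class KleeneAlg (K : Type) extends DeMorganAlg K where
  inf_compl_le_sup_compl : ∀ k₁ k₂ : K, k₁ ⊓ compl k₁ ≤ k₂ ⊔ compl k₂

/-- A Boolean algebra: a Kleene algebra with `k ⊓ k̄ = 0` and `k ⊔ k̄ = 1`. -/
class BooleanDMAlg (K : Type) extends KleeneAlg K where
  inf_compl_self : ∀ k : K, k ⊓ compl k = ⊥
  sup_compl_self : ∀ k : K, k ⊔ compl k = ⊤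

/-- Equivalence of fPCL formulas over the concrete De Morgan algebra `K`. -/
def pclEquivAt (K : Type) [DeMorganAlg K] {P : Type} (ζ₁ ζ₂ : fPCL P) : Prop :=
  ∀ γ : Finset (fI P K), γ.Nonempty → ζ₁.sem γ = ζ₂.sem γ

/-- Iterated fuzzy conjunction of a nonempty list `φ :: l` of fPIL formulas. -/
def fPIL.foldConj {P : Type} : fPIL P → List (fPIL P) → fPIL P
  | φ, [] => φ
  | φ, ψ :: l => fPIL.fconj φ (fPIL.foldConj ψ l)

/-- Iterated fuzzy disjunction of a nonempty list `φ :: l` of fPIL formulas. -/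
def fPIL.foldDisj {P : Type} : fPIL P → List (fPIL P) → fPIL P
  | φ, [] => φ
  | φ, ψ :: l => fPIL.fdisj φ (fPIL.foldDisj ψ l)

/-- Iterated coalescing of a nonempty list `ζ :: l` of fPCL formulas. -/
def fPCL.foldCoal {P : Type} : fPCL P → List (fPCL P) → fPCL P
  | ζ, [] => ζ
  | ζ, ζ' :: l => fPCL.coal ζ (fPCL.foldCoal ζ' l)

/-- Iterated fuzzy disjunction of a nonempty list `ζ :: l` of fPCL formulas. -/
def fPCL.foldOplus {P : Type} : fPCL P → List (fPCL P) → fPCL P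
  | ζ, [] => ζ
  | ζ, ζ' :: l => fPCL.oplus ζ (fPCL.foldOplus ζ' l)

/-- An f-monomial: a formula `(⋀f_{p∈P₁} p) ∧f (⋀f_{p∈P₂} !p)` with
`P₁, P₂ ⊆ P` and `P₁ ∪ P₂ ≠ ∅` (the subsets are given by duplicate-free lists
of ports, positive literals first). -/
def IsFMonomial {P : Type} (φ : fPIL P) : Prop :=
  ∃ (l₁ l₂ : List P) (ψ : fPIL P) (l : List (fPIL P)),
    l₁.Nodup ∧ l₂.Nodup ∧
    l₁.map fPIL.port ++ l₂.map (fun p => fPIL.fnot (fPIL.port p)) = ψ :: l ∧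
    φ = fPIL.foldConj ψ l

/-- An fPIL formula is in fpil-normal form if it is `true`, or `false`, or a
finite fuzzy disjunction of pairwise non-equivalent f-monomials. -/
def IsFpilNF {P : Type} (φ : fPIL P) : Prop :=
  φ = fPIL.tt ∨ φ = fPIL.ff ∨
    ∃ (ψ : fPIL P) (l : List (fPIL P)),
      (∀ χ ∈ ψ :: l, IsFMonomial χ) ∧
      (ψ :: l).Pairwise (fun χ₁ χ₂ => ¬ pilEquiv χ₁ χ₂) ∧
      φ = fPIL.foldDisj ψ l

/-- The fPCL formula `⊎_{j∈J_i} φ_{i,j}` associated with a (nonempty) block of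
fPIL formulas. -/
def blockF {P : Type} (b : fPIL P × List (fPIL P)) : fPCL P :=
  fPCL.foldCoal (.pil b.1) (b.2.map fPCL.pil)

/-- An fPCL formula is in normal form if it is `true`, or `false`, or of the
form `⊕_{i∈I} ⊎_{j∈J_i} φ_{i,j}` with `I` and each `J_i` finite and nonempty,
each `φ_{i,j}` in fpil-normal form and not equivalent to `false`, the `φ_{i,j}`
pairwise non-equivalent within each block, and the coalesced blocks pairwise
non-equivalent. -/
def IsNormalForm {P : Type} (ζ : fPCL P) : Prop :=
  ζ = fPCL.pil fPIL.tt ∨ ζ = fPCL.pil fPIL.ff ∨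
    ∃ (B : fPIL P × List (fPIL P)) (L : List (fPIL P × List (fPIL P))),
      (∀ b ∈ B :: L, ∀ φ ∈ b.1 :: b.2,
        IsFpilNF φ ∧ ¬ pclEquiv (fPCL.pil φ) (fPCL.pil fPIL.ff)) ∧
      (∀ b ∈ B :: L,
        (b.1 :: b.2).Pairwise fun φ₁ φ₂ =>
          ¬ pclEquiv (fPCL.pil φ₁) (fPCL.pil φ₂)) ∧
      ((B :: L).Pairwise fun b₁ b₂ => ¬ pclEquiv (blockF b₁) (blockF b₂)) ∧
      ζ = fPCL.foldOplus (blockF B) (L.map blockF)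


/-!
On a nonempty set `γ` of interactions, the coalescence `⊎_{φ ∈ s} φ` of a finite set `s` of fPIL
formulas has the value `coalSem s γ = ⋀_{a ∈ γ} ⋁_{φ ∈ s} φ(a) ⊓ ⋀_{φ ∈ s} ⋁_{a ∈ γ} φ(a)`, and
every fPCL formula denotes a finite join of such blocks: joins of blocks are closed under `⊕`, under
`⊎` (take unions of blocks), and under `¬` (the complement of a block is a join of blocks by the De
Morgan laws, and a meet of two blocks is again a block). The identities between blocks only involve
`⊔` and `⊓`, so by the prime ideal theorem it suffices to check them in the two-element lattice,
where they are statements about covers of `γ`. Replacing every component by a disjunctive normal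
form, removing duplicates up to equivalence and dropping blocks with a component equivalent to
`false` yields the normal form; being valid in every De Morgan algebra, it serves for Kleene and
Boolean algebras as well.
-/

open Finset Order

open scoped Classical

theorem DistribLattice.le_of_forall_boundedLatticeHom_Prop {α : Type*} [DistribLattice α]
    [BoundedOrder α] {x y : α} (h : ∀ f : BoundedLatticeHom α Prop, f x → f y) : x ≤ y := by
  by_contra hxy
  obtain ⟨J, hJ, hyJ, hxJ⟩ := DistribLattice.prime_ideal_of_disjoint_filter_ideal
    (F := PFilter.principal x) (I := Ideal.principal y) <| Set.disjoint_left.mpr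
      fun z hxz hzy => hxy ((PFilter.mem_principal.mp hxz).trans (Ideal.mem_principal.mp hzy))
  let f : BoundedLatticeHom α Prop :=
    { toFun := (· ∉ J)
      map_sup' := fun a b => propext <| (not_congr Ideal.sup_mem_iff).trans not_and_or
      map_inf' := fun a b => propext ⟨fun hab => ⟨fun ha => hab (J.lower inf_le_left ha),
          fun hb => hab (J.lower inf_le_right hb)⟩,
        fun ⟨ha, hb⟩ hab => (hJ.mem_or_mem hab).elim ha hb⟩
      map_top' := propext ⟨fun _ => trivial, fun _ => hJ.top_notMem⟩
      map_bot' := propext ⟨fun h => h J.bot_mem, False.elim⟩ }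
  exact h f (Set.disjoint_left.mp hxJ (PFilter.mem_principal.mpr le_rfl))
    (hyJ Ideal.mem_principal_self)

theorem DistribLattice.eq_of_forall_boundedLatticeHom_Prop {α : Type*} [DistribLattice α]
    [BoundedOrder α] {x y : α} (h : ∀ f : BoundedLatticeHom α Prop, f x ↔ f y) : x = y :=
  le_antisymm (le_of_forall_boundedLatticeHom_Prop fun f => (h f).mp)
    (le_of_forall_boundedLatticeHom_Prop fun f => (h f).mpr)

theorem BoundedLatticeHom.map_finset_sup_Prop {α ι : Type*} [Lattice α] [BoundedOrder α]
    (f : BoundedLatticeHom α Prop) (s : Finset ι) (g : ι → α) :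
    f (s.sup g) ↔ ∃ i ∈ s, f (g i) := by
  simp [map_finset_sup, Finset.sup_eq_iSup]

theorem BoundedLatticeHom.map_finset_inf_Prop {α ι : Type*} [Lattice α] [BoundedOrder α]
    (f : BoundedLatticeHom α Prop) (s : Finset ι) (g : ι → α) :
    f (s.inf g) ↔ ∀ i ∈ s, f (g i) := by
  simp [map_finset_inf, Finset.inf_eq_iInf]

theorem Finset.sup_eq_sup_of_forall_exists_le {α ι κ : Type*} [SemilatticeSup α] [OrderBot α]
    {s : Finset ι} {t : Finset κ} {f : ι → α} {g : κ → α}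
    (h₁ : ∀ i ∈ s, ∃ j ∈ t, f i ≤ g j) (h₂ : ∀ j ∈ t, ∃ i ∈ s, g j ≤ f i) :
    s.sup f = t.sup g :=
  le_antisymm (Finset.sup_le fun i hi => let ⟨_, hj, h⟩ := h₁ i hi; h.trans (le_sup hj))
    (Finset.sup_le fun j hj => let ⟨_, hi, h⟩ := h₂ j hj; h.trans (le_sup hi))

theorem List.toFinset_map {α β : Type*} [DecidableEq α] [DecidableEq β] (f : α → β) (l : List α) :
    (l.map f).toFinset = l.toFinset.image f := by
  ext; simp

theorem List.exists_rel_mem_pwFilter_not {α : Type*} {r : α → α → Prop} (hr : Equivalence r)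
    {l : List α} {x : α} (hx : x ∈ l) : ∃ y ∈ l.pwFilter (fun a b => ¬ r a b), r x y := by
  by_contra! h
  refine (List.forall_mem_pwFilter (fun hxz => ?_) x l).mp h x hx (hr.refl x)
  by_contra! hxyz
  exact hxz (hr.trans hxyz.1 hxyz.2)

namespace DeMorganAlg

variable {K : Type} [DeMorganAlg K]

theorem compl_le_compl {x y : K} (h : x ≤ y) : compl y ≤ compl x := by
  rw [← sup_eq_right.mpr h, compl_sup]
  exact inf_le_left

@[simp] theorem compl_top : compl (⊤ : K) = ⊥ :=
  le_bot_iff.mp <| by simpa only [compl_compl] using compl_le_compl (le_top (a := compl (⊥ : K)))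

@[simp] theorem compl_bot : compl (⊥ : K) = ⊤ := by
  rw [← compl_top, compl_compl]

theorem compl_finset_sup {ι : Type*} (s : Finset ι) (f : ι → K) :
    compl (s.sup f) = s.inf fun i => compl (f i) := by
  induction s using Finset.cons_induction with
  | empty => simp
  | cons i s _ ih => simp [compl_sup, ih]

theorem compl_finset_inf {ι : Type*} (s : Finset ι) (f : ι → K) :
    compl (s.inf f) = s.sup fun i => compl (f i) := by
  induction s using Finset.cons_induction with
  | empty => simp
  | cons i s _ ih => simp [compl_inf, ih]

end DeMorganAlg

namespace fPIL

variable {P K : Type} [DeMorganAlg K]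

@[simp] theorem sem_tt (a : fI P K) : (tt : fPIL P).sem a = ⊤ := rfl

@[simp] theorem sem_port (p : P) (a : fI P K) : (port p).sem a = a.1 p := rfl

@[simp] theorem sem_fnot (φ : fPIL P) (a : fI P K) :
    φ.fnot.sem a = DeMorganAlg.compl (φ.sem a) := rfl

@[simp] theorem sem_fdisj (φ ψ : fPIL P) (a : fI P K) :
    (fdisj φ ψ).sem a = φ.sem a ⊔ ψ.sem a := rfl

@[simp] theorem sem_fconj (φ ψ : fPIL P) (a : fI P K) :
    (fconj φ ψ).sem a = φ.sem a ⊓ ψ.sem a := by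
  simp [fconj, DeMorganAlg.compl_sup, DeMorganAlg.compl_compl]

@[simp] theorem sem_ff (a : fI P K) : (ff : fPIL P).sem a = ⊥ := by
  simp [ff]

theorem sem_foldDisj (φ : fPIL P) (l : List (fPIL P)) (a : fI P K) :
    (foldDisj φ l).sem a = (φ :: l).toFinset.sup fun χ => χ.sem a := by
  induction l generalizing φ with
  | nil => simp [foldDisj]
  | cons ψ l ih => simp [foldDisj, ih]

theorem sem_foldConj (φ : fPIL P) (l : List (fPIL P)) (a : fI P K) :
    (foldConj φ l).sem a = (φ :: l).toFinset.inf fun χ => χ.sem a := by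
  induction l generalizing φ with
  | nil => simp [foldConj]
  | cons ψ l ih => simp [foldConj, ih]

def bigDisj : List (fPIL P) → fPIL P
  | [] => ff
  | φ :: l => foldDisj φ l

def bigConj : List (fPIL P) → fPIL P
  | [] => tt
  | φ :: l => foldConj φ l

@[simp] theorem sem_bigDisj (l : List (fPIL P)) (a : fI P K) :
    (bigDisj l).sem a = l.toFinset.sup fun χ => χ.sem a := by
  cases l <;> simp [bigDisj, sem_foldDisj]

@[simp] theorem sem_bigConj (l : List (fPIL P)) (a : fI P K) :
    (bigConj l).sem a = l.toFinset.inf fun χ => χ.sem a := by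
  cases l <;> simp [bigConj, sem_foldConj]

end fPIL

theorem pilEquiv_equivalence {P : Type} : Equivalence (@pilEquiv P) where
  refl _ _ _ _ := rfl
  symm h K _ a := (h K a).symm
  trans h₁ h₂ K _ a := (h₁ K a).trans (h₂ K a)

theorem pclEquiv_equivalence {P : Type} : Equivalence (@pclEquiv P) where
  refl _ _ _ _ _ := rfl
  symm h K _ γ hγ := (h K γ hγ).symm
  trans h₁ h₂ K _ γ hγ := (h₁ K γ hγ).trans (h₂ K γ hγ)

section DisjunctiveNormalForm

variable {P : Type}

def monoSem {K : Type} [DeMorganAlg K] (m : Finset P × Finset P) (a : fI P K) : K :=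
  (m.1.inf fun p => a.1 p) ⊓ m.2.inf fun p => DeMorganAlg.compl (a.1 p)

theorem monoSem_sup {K : Type} [DeMorganAlg K] (m m' : Finset P × Finset P) (a : fI P K) :
    monoSem (m ⊔ m') a = monoSem m a ⊓ monoSem m' a := by
  simp only [monoSem, Prod.fst_sup, Prod.snd_sup, sup_eq_union, inf_union]
  ac_rfl

noncomputable def negMono (m : Finset P × Finset P) : Finset (Finset P × Finset P) :=
  m.1.image (fun p => (∅, {p})) ∪ m.2.image fun p => ({p}, ∅)

theorem compl_monoSem {K : Type} [DeMorganAlg K] (m : Finset P × Finset P) (a : fI P K) :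
    DeMorganAlg.compl (monoSem m a) = (negMono m).sup (monoSem · a) := by
  simp [monoSem, negMono, DeMorganAlg.compl_inf, DeMorganAlg.compl_finset_inf, sup_union,
    sup_image, Function.comp_def, DeMorganAlg.compl_compl]

theorem exists_dnf_compl (M : Finset (Finset P × Finset P)) :
    ∃ N : Finset (Finset P × Finset P), ∀ (K : Type) [DeMorganAlg K] (a : fI P K),
      DeMorganAlg.compl (M.sup (monoSem · a)) = N.sup (monoSem · a) := by
  induction M using Finset.induction_on with
  | empty => exact ⟨{(∅, ∅)}, fun K _ a => by simp [monoSem]⟩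
  | insert m M _ ih =>
    obtain ⟨N, hN⟩ := ih
    refine ⟨(negMono m ×ˢ N).image fun q => q.1 ⊔ q.2, fun K _ a => ?_⟩
    rw [sup_insert, DeMorganAlg.compl_sup, hN, compl_monoSem, sup_inf_sup, sup_image]
    simp only [Function.comp_def, monoSem_sup]

theorem exists_dnf (φ : fPIL P) :
    ∃ M : Finset (Finset P × Finset P), ∀ (K : Type) [DeMorganAlg K] (a : fI P K),
      φ.sem a = M.sup (monoSem · a) := by
  induction φ with
  | tt => exact ⟨{(∅, ∅)}, fun K _ a => by simp [monoSem]⟩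
  | port p => exact ⟨{({p}, ∅)}, fun K _ a => by simp [monoSem]⟩
  | fnot φ ih =>
    obtain ⟨M, hM⟩ := ih
    obtain ⟨N, hN⟩ := exists_dnf_compl M
    exact ⟨N, fun K _ a => by rw [fPIL.sem_fnot, hM, hN]⟩
  | fdisj φ ψ ihφ ihψ =>
    obtain ⟨M, hM⟩ := ihφ
    obtain ⟨N, hN⟩ := ihψ
    exact ⟨M ∪ N, fun K _ a => by rw [fPIL.sem_fdisj, hM, hN, sup_union]⟩

noncomputable def monoF (m : Finset P × Finset P) : fPIL P :=
  fPIL.bigConj (m.1.toList.map .port ++ m.2.toList.map fun p => (fPIL.port p).fnot)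

theorem sem_monoF {K : Type} [DeMorganAlg K] (m : Finset P × Finset P) (a : fI P K) :
    (monoF m).sem a = monoSem m a := by
  simp [monoF, monoSem, List.toFinset_append, List.toFinset_map, inf_union, inf_image,
    Function.comp_def]

theorem isFMonomial_monoF {m : Finset P × Finset P} (hm : m ≠ (∅, ∅)) :
    IsFMonomial (monoF m) := by
  obtain ⟨ψ, l, hl⟩ := List.exists_cons_of_ne_nil (l := m.1.toList.map fPIL.port ++
      m.2.toList.map fun p => (fPIL.port p).fnot) <| by
    obtain ⟨m₁, m₂⟩ := m
    simpa [Prod.ext_iff, or_iff_not_imp_left] using hm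
  exact ⟨m.1.toList, m.2.toList, ψ, l, nodup_toList _, nodup_toList _, hl,
    by simp only [monoF, hl, fPIL.bigConj]⟩

theorem isFpilNF_bigDisj {l : List (fPIL P)} (hmono : ∀ χ ∈ l, IsFMonomial χ)
    (hpw : l.Pairwise fun χ₁ χ₂ => ¬ pilEquiv χ₁ χ₂) : IsFpilNF (fPIL.bigDisj l) := by
  cases l with
  | nil => exact Or.inr (Or.inl rfl)
  | cons ψ l => exact Or.inr (Or.inr ⟨ψ, l, hmono, hpw, rfl⟩)

theorem exists_isFpilNF (φ : fPIL P) : ∃ φ', IsFpilNF φ' ∧ pilEquiv φ φ' := by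
  obtain ⟨M, hM⟩ := exists_dnf φ
  by_cases h0 : (∅, ∅) ∈ M
  · refine ⟨fPIL.tt, Or.inl rfl, fun K _ a => ?_⟩
    rw [hM, fPIL.sem_tt]
    exact top_unique (le_sup_of_le h0 (by simp [monoSem]))
  let l := (M.toList.map monoF).pwFilter fun χ₁ χ₂ => ¬ pilEquiv χ₁ χ₂
  have hl : ∀ χ ∈ l, ∃ m ∈ M, χ = monoF m := fun χ hχ => by
    obtain ⟨m, hm, rfl⟩ := List.mem_map.mp (List.pwFilter_subset _ hχ)
    exact ⟨m, mem_toList.mp hm, rfl⟩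
  refine ⟨fPIL.bigDisj l, isFpilNF_bigDisj (fun χ hχ => ?_) (List.pairwise_pwFilter _),
    fun K _ a => ?_⟩
  · obtain ⟨m, hm, rfl⟩ := hl χ hχ
    exact isFMonomial_monoF (ne_of_mem_of_not_mem hm h0)
  rw [hM, fPIL.sem_bigDisj]
  refine sup_eq_sup_of_forall_exists_le (fun m hm => ?_) (fun χ hχ => ?_)
  · obtain ⟨χ, hχ, he⟩ := List.exists_rel_mem_pwFilter_not pilEquiv_equivalence
      (List.mem_map_of_mem (f := monoF) (mem_toList.mpr hm))
    exact ⟨χ, List.mem_toFinset.mpr hχ, ((sem_monoF m a).symm.trans (he K a)).le⟩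
  · obtain ⟨m, hm, rfl⟩ := hl χ (List.mem_toFinset.mp hχ)
    exact ⟨m, hm, (sem_monoF m a).le⟩

end DisjunctiveNormalForm

section Coalescing

variable {P K : Type} [DeMorganAlg K]

def coalSem (s : Finset (fPIL P)) (γ : Finset (fI P K)) : K :=
  (γ.inf fun a => s.sup fun φ => φ.sem a) ⊓ s.inf fun φ => γ.sup fun a => φ.sem a

theorem map_coalSem (f : BoundedLatticeHom K Prop) (s : Finset (fPIL P)) (γ : Finset (fI P K)) :
    f (coalSem s γ) ↔ (∀ a ∈ γ, ∃ φ ∈ s, f (φ.sem a)) ∧ ∀ φ ∈ s, ∃ a ∈ γ, f (φ.sem a) := by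
  simp only [coalSem, map_inf, BoundedLatticeHom.map_finset_inf_Prop,
    BoundedLatticeHom.map_finset_sup_Prop, inf_Prop_eq]

noncomputable def covers (γ : Finset (fI P K)) : Finset (Finset (fI P K) × Finset (fI P K)) :=
  (γ.powerset ×ˢ γ.powerset).filter fun q => q.1.Nonempty ∧ q.2.Nonempty ∧ q.1 ∪ q.2 = γ

theorem sem_coal (ζ₁ ζ₂ : fPCL P) (γ : Finset (fI P K)) :
    (fPCL.coal ζ₁ ζ₂).sem γ = (covers γ).sup fun q => ζ₁.sem q.1 ⊓ ζ₂.sem q.2 := rfl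

theorem mem_covers {γ : Finset (fI P K)} {q : Finset (fI P K) × Finset (fI P K)} :
    q ∈ covers γ ↔ q.1.Nonempty ∧ q.2.Nonempty ∧ q.1 ∪ q.2 = γ := by
  simp only [covers, mem_filter, mem_product, mem_powerset, and_iff_right_iff_imp]
  rintro ⟨-, -, rfl⟩
  exact ⟨subset_union_left, subset_union_right⟩


theorem coalSem_union {s t : Finset (fPIL P)} (hs : s.Nonempty) (ht : t.Nonempty)
    (γ : Finset (fI P K)) :
    (covers γ).sup (fun q => coalSem s q.1 ⊓ coalSem t q.2) = coalSem (s ∪ t) γ := by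
  refine DistribLattice.eq_of_forall_boundedLatticeHom_Prop fun f => ?_
  simp only [BoundedLatticeHom.map_finset_sup_Prop, map_inf, inf_Prop_eq, map_coalSem,
    mem_covers, mem_union]
  constructor
  · rintro ⟨⟨γ₁, γ₂⟩, ⟨-, -, rfl⟩, ⟨hγ₁, hs₁⟩, hγ₂, ht₂⟩
    refine ⟨fun a ha => ?_, fun φ hφ => ?_⟩
    · rcases mem_union.mp ha with ha | ha
      · obtain ⟨φ, hφ, h⟩ := hγ₁ a ha
        exact ⟨φ, Or.inl hφ, h⟩
      · obtain ⟨φ, hφ, h⟩ := hγ₂ a ha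
        exact ⟨φ, Or.inr hφ, h⟩
    · rcases hφ with hφ | hφ
      · obtain ⟨a, ha, h⟩ := hs₁ φ hφ
        exact ⟨a, mem_union_left _ ha, h⟩
      · obtain ⟨a, ha, h⟩ := ht₂ φ hφ
        exact ⟨a, mem_union_right _ ha, h⟩
  · -- the cover: each side takes the points where one of its formulas holds
    rintro ⟨hγ, hst⟩
    have hwit : ∀ u : Finset (fPIL P), u ⊆ s ∪ t → ∀ φ ∈ u,
        ∃ a ∈ γ.filter (fun a => ∃ φ ∈ u, f (φ.sem a)), f (φ.sem a) := fun u hu φ hφ => by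
      obtain ⟨a, ha, h⟩ := hst φ (mem_union.mp (hu hφ))
      exact ⟨a, mem_filter.mpr ⟨ha, φ, hφ, h⟩, h⟩
    have hne : ∀ u : Finset (fPIL P), u ⊆ s ∪ t → u.Nonempty →
        (γ.filter fun a => ∃ φ ∈ u, f (φ.sem a)).Nonempty := fun u hu ⟨φ, hφ⟩ =>
      let ⟨a, ha, _⟩ := hwit u hu φ hφ; ⟨a, ha⟩
    refine ⟨(γ.filter fun a => ∃ φ ∈ s, f (φ.sem a), γ.filter fun a => ∃ φ ∈ t, f (φ.sem a)),
      ⟨hne s subset_union_left hs, hne t subset_union_right ht, ?_⟩,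
      ⟨fun a ha => (mem_filter.mp ha).2, hwit s subset_union_left⟩,
      fun a ha => (mem_filter.mp ha).2, hwit t subset_union_right⟩
    rw [← filter_or, filter_true_of_mem]
    intro a ha
    obtain ⟨φ, hφ | hφ, h⟩ := hγ a ha
    exacts [Or.inl ⟨φ, hφ, h⟩, Or.inr ⟨φ, hφ, h⟩]


theorem coalSem_singleton (φ : fPIL P) {γ : Finset (fI P K)} (hγ : γ.Nonempty) :
    coalSem {φ} γ = γ.inf fun a => φ.sem a := by
  obtain ⟨a, ha⟩ := hγ
  simp only [coalSem, sup_singleton, inf_singleton]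
  exact inf_eq_left.mpr ((inf_le ha).trans (le_sup ha))

theorem coalSem_pair_tt (φ : fPIL P) (γ : Finset (fI P K)) :
    coalSem {fPIL.tt, φ} γ = γ.sup fun a => φ.sem a := by
  refine DistribLattice.eq_of_forall_boundedLatticeHom_Prop fun f => ?_
  rw [map_coalSem, BoundedLatticeHom.map_finset_sup_Prop]
  simpa using fun a ha _ => ⟨a, ha⟩

-- `⋀_a ⋁s(a) ⊓ ⋁_a ψ(a) = ⋀_a ⋁s(a) ⊓ ⋁_a (ψ ∧ ⋁s)(a)`, so each component may be cut down to
-- the other block's disjunction.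
noncomputable def meetBlock (s t : Finset (fPIL P)) : Finset (fPIL P) :=
  s.image (·.fconj (fPIL.bigDisj t.toList)) ∪ t.image (·.fconj (fPIL.bigDisj s.toList))

theorem coalSem_meetBlock (s t : Finset (fPIL P)) (γ : Finset (fI P K)) :
    coalSem s γ ⊓ coalSem t γ = coalSem (meetBlock s t) γ := by
  refine DistribLattice.eq_of_forall_boundedLatticeHom_Prop fun f => ?_
  rw [map_inf, map_coalSem, map_coalSem, map_coalSem]
  simp only [meetBlock, mem_union, or_and_right, exists_or, or_imp, forall_and, forall_mem_image,
    exists_mem_image, fPIL.sem_fconj, map_inf, inf_Prop_eq, fPIL.sem_bigDisj, toList_toFinset,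
    BoundedLatticeHom.map_finset_sup_Prop]
  constructor
  · rintro ⟨⟨hs, hs'⟩, ht, ht'⟩
    refine ⟨fun a ha => Or.inl ?_, fun φ hφ => ?_, fun ψ hψ => ?_⟩
    · obtain ⟨φ, hφ, h⟩ := hs a ha
      exact ⟨φ, hφ, h, ht a ha⟩
    · obtain ⟨a, ha, h⟩ := hs' φ hφ
      exact ⟨a, ha, h, ht a ha⟩
    · obtain ⟨a, ha, h⟩ := ht' ψ hψ
      exact ⟨a, ha, h, hs a ha⟩
  · rintro ⟨hγ, hs, ht⟩
    have hboth : ∀ a ∈ γ, (∃ φ ∈ s, f (φ.sem a)) ∧ ∃ ψ ∈ t, f (ψ.sem a) := fun a ha => by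
      rcases hγ a ha with ⟨φ, hφ, h, ht⟩ | ⟨ψ, hψ, h, hs⟩
      exacts [⟨⟨φ, hφ, h⟩, ht⟩, ⟨hs, ψ, hψ, h⟩]
    refine ⟨⟨fun a ha => (hboth a ha).1, fun φ hφ => ?_⟩, fun a ha => (hboth a ha).2,
      fun ψ hψ => ?_⟩
    · obtain ⟨a, ha, h, -⟩ := hs hφ
      exact ⟨a, ha, h⟩
    · obtain ⟨a, ha, h, -⟩ := ht hψ
      exact ⟨a, ha, h⟩

noncomputable def negBlocks (s : Finset (fPIL P)) : Finset (Finset (fPIL P)) :=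
  insert {fPIL.tt, (fPIL.bigDisj s.toList).fnot} (s.image fun φ => {φ.fnot})

theorem compl_coalSem (s : Finset (fPIL P)) {γ : Finset (fI P K)} (hγ : γ.Nonempty) :
    DeMorganAlg.compl (coalSem s γ) = (negBlocks s).sup (coalSem · γ) := by
  simp only [negBlocks, sup_insert, sup_image, Function.comp_def, coalSem_pair_tt,
    coalSem_singleton _ hγ, fPIL.sem_fnot, fPIL.sem_bigDisj, toList_toFinset]
  simp only [coalSem, DeMorganAlg.compl_inf, DeMorganAlg.compl_finset_inf,
    DeMorganAlg.compl_finset_sup]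

theorem nonempty_of_mem_negBlocks {s u : Finset (fPIL P)} (hu : u ∈ negBlocks s) :
    u.Nonempty := by
  simp only [negBlocks, mem_insert, mem_image] at hu
  rcases hu with rfl | ⟨φ, -, rfl⟩
  exacts [insert_nonempty _ _, singleton_nonempty _]

theorem exists_compl_sup_coalSem (B : Finset (Finset (fPIL P))) :
    ∃ C : Finset (Finset (fPIL P)), (∀ s ∈ C, s.Nonempty) ∧
      ∀ (K : Type) [DeMorganAlg K] (γ : Finset (fI P K)), γ.Nonempty →
        DeMorganAlg.compl (B.sup (coalSem · γ)) = C.sup (coalSem · γ) := by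
  induction B using Finset.induction_on with
  | empty => exact ⟨{{fPIL.tt}}, by simp, fun K _ γ hγ => by simp [coalSem_singleton _ hγ]⟩
  | insert s B _ ih =>
    obtain ⟨C, hC, hBC⟩ := ih
    refine ⟨(negBlocks s ×ˢ C).image fun q => meetBlock q.1 q.2, ?_, fun K _ γ hγ => ?_⟩
    · simp only [forall_mem_image, mem_product]
      rintro ⟨u, v⟩ ⟨hu, -⟩
      exact ((nonempty_of_mem_negBlocks hu).image _).mono subset_union_left
    · rw [sup_insert, DeMorganAlg.compl_sup, hBC K γ hγ, compl_coalSem s hγ, sup_inf_sup,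
        sup_image]
      simp only [Function.comp_def, coalSem_meetBlock]

theorem exists_sem_eq_sup_coalSem (ζ : fPCL P) :
    ∃ B : Finset (Finset (fPIL P)), (∀ s ∈ B, s.Nonempty) ∧
      ∀ (K : Type) [DeMorganAlg K] (γ : Finset (fI P K)), γ.Nonempty →
        ζ.sem γ = B.sup (coalSem · γ) := by
  induction ζ with
  | pil φ =>
    exact ⟨{{φ}}, by simp, fun K _ γ hγ => by rw [sup_singleton, coalSem_singleton φ hγ]; rfl⟩
  | cneg ζ ih =>
    obtain ⟨B, -, hB⟩ := ih
    obtain ⟨C, hC, hBC⟩ := exists_compl_sup_coalSem B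
    exact ⟨C, hC, fun K _ γ hγ => (congrArg DeMorganAlg.compl (hB K γ hγ)).trans (hBC K γ hγ)⟩
  | oplus ζ₁ ζ₂ ih₁ ih₂ =>
    obtain ⟨B, hB, hζB⟩ := ih₁
    obtain ⟨C, hC, hζC⟩ := ih₂
    refine ⟨B ∪ C, fun s hs => (mem_union.mp hs).elim (hB s) (hC s), fun K _ γ hγ => ?_⟩
    rw [sup_union, ← hζB K γ hγ, ← hζC K γ hγ]
    rfl
  | coal ζ₁ ζ₂ ih₁ ih₂ =>
    obtain ⟨B, hB, hζB⟩ := ih₁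
    obtain ⟨C, hC, hζC⟩ := ih₂
    refine ⟨(B ×ˢ C).image fun q => q.1 ∪ q.2, ?_, fun K _ γ hγ => ?_⟩
    · simp only [forall_mem_image, mem_product]
      rintro ⟨u, v⟩ ⟨hu, -⟩
      exact (hB u hu).mono subset_union_left
    calc (fPCL.coal ζ₁ ζ₂).sem γ
        = (covers γ).sup fun q => (B ×ˢ C).sup fun p => coalSem p.1 q.1 ⊓ coalSem p.2 q.2 := by
          refine sup_congr rfl fun q hq => ?_
          obtain ⟨h₁, h₂, -⟩ := mem_covers.mp hq
          rw [hζB K _ h₁, hζC K _ h₂, sup_inf_sup]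
      _ = (B ×ˢ C).sup fun p => (covers γ).sup fun q => coalSem p.1 q.1 ⊓ coalSem p.2 q.2 :=
          Finset.sup_comm _ _ _
      _ = ((B ×ˢ C).image fun q => q.1 ∪ q.2).sup (coalSem · γ) := by
          rw [sup_image]
          refine sup_congr rfl fun p hp => ?_
          obtain ⟨hp₁, hp₂⟩ := mem_product.mp hp
          exact coalSem_union (hB _ hp₁) (hC _ hp₂) γ

end Coalescing

section NormalForm

variable {P : Type}

theorem pclEquiv_pil_iff {φ ψ : fPIL P} : pclEquiv (.pil φ) (.pil ψ) ↔ pilEquiv φ ψ := by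
  refine ⟨fun h K _ a => ?_, fun h K _ γ _ => inf_congr rfl fun a _ => h K a⟩
  simpa [fPCL.sem] using h K {a} (singleton_nonempty a)

theorem sem_blockF {K : Type} [DeMorganAlg K] (ψ : fPIL P) (t : List (fPIL P))
    {γ : Finset (fI P K)} (hγ : γ.Nonempty) :
    (blockF (ψ, t)).sem γ = coalSem (ψ :: t).toFinset γ := by
  induction t generalizing ψ γ with
  | nil =>
    rw [List.toFinset_cons, List.toFinset_nil, insert_empty, coalSem_singleton ψ hγ]
    rfl
  | cons χ t ih =>
    change (fPCL.coal (.pil ψ) (blockF (χ, t))).sem γ = _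
    rw [sem_coal, List.toFinset_cons, insert_eq, ← coalSem_union (singleton_nonempty ψ)
      ((List.toFinset_nonempty_iff _).mpr (List.cons_ne_nil χ t)) γ]
    refine sup_congr rfl fun q hq => ?_
    obtain ⟨h₁, h₂, -⟩ := mem_covers.mp hq
    rw [ih χ h₂, coalSem_singleton ψ h₁]
    rfl

theorem coalSem_congr {s s' : Finset (fPIL P)} (h₁ : ∀ φ ∈ s, ∃ φ' ∈ s', pilEquiv φ φ')
    (h₂ : ∀ φ' ∈ s', ∃ φ ∈ s, pilEquiv φ' φ) {K : Type} [DeMorganAlg K]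
    (γ : Finset (fI P K)) : coalSem s γ = coalSem s' γ := by
  refine DistribLattice.eq_of_forall_boundedLatticeHom_Prop fun f => ?_
  rw [map_coalSem, map_coalSem]
  have key : ∀ {u v : Finset (fPIL P)}, (∀ φ ∈ u, ∃ φ' ∈ v, pilEquiv φ φ') →
      (∀ φ' ∈ v, ∃ φ ∈ u, pilEquiv φ' φ) →
      ((∀ a ∈ γ, ∃ φ ∈ u, f (φ.sem a)) ∧ ∀ φ ∈ u, ∃ a ∈ γ, f (φ.sem a)) →
      ((∀ a ∈ γ, ∃ φ ∈ v, f (φ.sem a)) ∧ ∀ φ ∈ v, ∃ a ∈ γ, f (φ.sem a)) := by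
    rintro u v huv hvu ⟨hγ, hu⟩
    refine ⟨fun a ha => ?_, fun φ' hφ' => ?_⟩
    · obtain ⟨φ, hφ, h⟩ := hγ a ha
      obtain ⟨φ', hφ', he⟩ := huv φ hφ
      exact ⟨φ', hφ', he K a ▸ h⟩
    · obtain ⟨φ, hφ, he⟩ := hvu φ' hφ'
      obtain ⟨a, ha, h⟩ := hu φ hφ
      exact ⟨a, ha, (he K a).symm ▸ h⟩
  exact ⟨key h₁ h₂, key h₂ h₁⟩

theorem coalSem_eq_bot {s : Finset (fPIL P)} {φ : fPIL P} (hφ : φ ∈ s)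
    (hff : pilEquiv φ fPIL.ff) {K : Type} [DeMorganAlg K] (γ : Finset (fI P K)) :
    coalSem s γ = ⊥ :=
  le_bot_iff.mp <| inf_le_right.trans <| (inf_le hφ).trans <|
    Finset.sup_le fun a _ => by rw [hff K a, fPIL.sem_ff]

def IsNormalBlock (b : fPIL P × List (fPIL P)) : Prop :=
  (∀ φ ∈ b.1 :: b.2, IsFpilNF φ ∧ ¬ pclEquiv (fPCL.pil φ) (fPCL.pil fPIL.ff)) ∧
    (b.1 :: b.2).Pairwise fun φ₁ φ₂ => ¬ pclEquiv (fPCL.pil φ₁) (fPCL.pil φ₂)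

theorem exists_normalBlock {s : Finset (fPIL P)} (hs : s.Nonempty) :
    (∀ (K : Type) [DeMorganAlg K] (γ : Finset (fI P K)), coalSem s γ = ⊥) ∨
      ∃ b, IsNormalBlock b ∧ ∀ (K : Type) [DeMorganAlg K] (γ : Finset (fI P K)),
        γ.Nonempty → (blockF b).sem γ = coalSem s γ := by
  choose nf hnf heq using exists_isFpilNF (P := P)
  set l := (s.toList.map nf).pwFilter fun φ₁ φ₂ => ¬ pilEquiv φ₁ φ₂ with hl
  have hsl : ∀ φ ∈ s, ∃ φ' ∈ l, pilEquiv φ φ' := fun φ hφ => by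
    obtain ⟨φ', hφ', he⟩ := List.exists_rel_mem_pwFilter_not pilEquiv_equivalence
      (List.mem_map_of_mem (f := nf) (mem_toList.mpr hφ))
    exact ⟨φ', hφ', pilEquiv_equivalence.trans (heq φ) he⟩
  have hls : ∀ φ' ∈ l, ∃ φ ∈ s, nf φ = φ' := fun φ' hφ' => by
    obtain ⟨φ, hφ, rfl⟩ := List.mem_map.mp (List.pwFilter_subset _ hφ')
    exact ⟨φ, mem_toList.mp hφ, rfl⟩
  have hsem : ∀ (K : Type) [DeMorganAlg K] (γ : Finset (fI P K)),
      coalSem s γ = coalSem l.toFinset γ := fun K _ γ => by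
    refine coalSem_congr (fun φ hφ => ?_) (fun φ' hφ' => ?_) γ
    · obtain ⟨φ', hφ', he⟩ := hsl φ hφ
      exact ⟨φ', List.mem_toFinset.mpr hφ', he⟩
    · obtain ⟨φ, hφ, rfl⟩ := hls φ' (List.mem_toFinset.mp hφ')
      exact ⟨φ, hφ, pilEquiv_equivalence.symm (heq φ)⟩
  by_cases hff : ∃ φ ∈ l, pilEquiv φ fPIL.ff
  · obtain ⟨φ, hφ, hff⟩ := hff
    exact Or.inl fun K _ γ => (hsem K γ).trans (coalSem_eq_bot (List.mem_toFinset.mpr hφ) hff γ)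
  push Not at hff
  obtain ⟨φ, hφ⟩ := hs
  obtain ⟨φ', hφ', -⟩ := hsl φ hφ
  obtain ⟨ψ, t, hψt⟩ := List.exists_cons_of_ne_nil (List.ne_nil_of_mem hφ')
  refine Or.inr ⟨(ψ, t), ⟨fun χ hχ => ?_, hψt ▸ (List.pairwise_pwFilter _).imp
    fun h h' => h (pclEquiv_pil_iff.mp h')⟩, fun K _ γ hγ => ?_⟩
  · rw [← hψt] at hχ
    obtain ⟨φ, -, rfl⟩ := hls χ hχ
    exact ⟨hnf φ, fun h => hff _ hχ (pclEquiv_pil_iff.mp h)⟩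
  · rw [sem_blockF ψ t hγ, ← hψt, hsem]

theorem exists_normalBlocks (B : Finset (Finset (fPIL P))) (hB : ∀ s ∈ B, s.Nonempty) :
    ∃ Bs : Finset (fPIL P × List (fPIL P)), (∀ b ∈ Bs, IsNormalBlock b) ∧
      ∀ (K : Type) [DeMorganAlg K] (γ : Finset (fI P K)), γ.Nonempty →
        B.sup (coalSem · γ) = Bs.sup fun b => (blockF b).sem γ := by
  induction B using Finset.induction_on with
  | empty => exact ⟨∅, by simp, by simp⟩
  | insert s B _ ih =>
    obtain ⟨Bs, hBs, hsem⟩ := ih fun u hu => hB u (mem_insert_of_mem hu)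
    rcases exists_normalBlock (hB s (mem_insert_self s B)) with hbot | ⟨b, hb, hbs⟩
    · exact ⟨Bs, hBs, fun K _ γ hγ => by rw [sup_insert, hbot, bot_sup_eq, hsem K γ hγ]⟩
    · refine ⟨insert b Bs, forall_mem_insert _ _ _ |>.mpr ⟨hb, hBs⟩, fun K _ γ hγ => ?_⟩
      rw [sup_insert, sup_insert, hsem K γ hγ, hbs K γ hγ]

def fPCL.bigOplus : List (fPCL P) → fPCL P
  | [] => .pil .ff
  | ζ :: l => foldOplus ζ l

theorem fPCL.sem_foldOplus {K : Type} [DeMorganAlg K] (ζ : fPCL P) (l : List (fPCL P))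
    (γ : Finset (fI P K)) : (foldOplus ζ l).sem γ = (ζ :: l).toFinset.sup (·.sem γ) := by
  induction l generalizing ζ with
  | nil => simp [foldOplus]
  | cons ζ' l ih =>
    change ζ.sem γ ⊔ (foldOplus ζ' l).sem γ = _
    simp [ih]

theorem fPCL.sem_bigOplus {K : Type} [DeMorganAlg K] (l : List (fPCL P))
    {γ : Finset (fI P K)} (hγ : γ.Nonempty) : (bigOplus l).sem γ = l.toFinset.sup (·.sem γ) := by
  cases l with
  | nil => simp [bigOplus, fPCL.sem, inf_const hγ]
  | cons ζ l => exact sem_foldOplus ζ l γ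

theorem isNormalForm_bigOplus {l : List (fPIL P × List (fPIL P))}
    (hl : ∀ b ∈ l, IsNormalBlock b)
    (hpw : l.Pairwise fun b₁ b₂ => ¬ pclEquiv (blockF b₁) (blockF b₂)) :
    IsNormalForm (fPCL.bigOplus (l.map blockF)) := by
  cases l with
  | nil => exact Or.inr (Or.inl rfl)
  | cons B L =>
    exact Or.inr (Or.inr ⟨B, L, fun b hb => (hl b hb).1, fun b hb => (hl b hb).2, hpw, rfl⟩)

theorem exists_isNormalForm (ζ : fPCL P) : ∃ ζ', IsNormalForm ζ' ∧ pclEquiv ζ ζ' := by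
  obtain ⟨B, hB, hζB⟩ := exists_sem_eq_sup_coalSem ζ
  obtain ⟨Bs, hBs, hBBs⟩ := exists_normalBlocks B hB
  let l := Bs.toList.pwFilter fun b₁ b₂ => ¬ pclEquiv (blockF b₁) (blockF b₂)
  have hlBs : ∀ b ∈ l, b ∈ Bs := fun b hb => mem_toList.mp (List.pwFilter_subset _ hb)
  refine ⟨fPCL.bigOplus (l.map blockF), isNormalForm_bigOplus (fun b hb => hBs b (hlBs b hb))
    (List.pairwise_pwFilter _), fun K _ γ hγ => ?_⟩
  rw [hζB K γ hγ, hBBs K γ hγ, fPCL.sem_bigOplus _ hγ, List.toFinset_map, sup_image]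
  refine sup_eq_sup_of_forall_exists_le (fun b hb => ?_)
    fun b hb => ⟨b, hlBs b (List.mem_toFinset.mp hb), le_rfl⟩
  obtain ⟨b', hb', he⟩ := List.exists_rel_mem_pwFilter_not (pclEquiv_equivalence.comap blockF)
    (mem_toList.mpr hb)
  exact ⟨b', List.mem_toFinset.mpr hb', (he K γ hγ).le⟩

end NormalForm

theorem fpcl_normal_form_general {P : Type} :
    (∀ ζ : fPCL P, ∃ ζ' : fPCL P, IsNormalForm ζ' ∧ pclEquiv ζ ζ') ∧
    (∀ (K : Type) [KleeneAlg K], ∀ ζ : fPCL P,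
      ∃ ζ' : fPCL P, IsNormalForm ζ' ∧ pclEquivAt K ζ ζ') ∧
    (∀ (B : Type) [BooleanDMAlg B], ∀ ζ : fPCL P,
      ∃ ζ' : fPCL P, IsNormalForm ζ' ∧ pclEquivAt B ζ ζ') :=
  ⟨exists_isNormalForm, fun K _ ζ => (exists_isNormalForm ζ).imp fun _ h => ⟨h.1, h.2 K⟩,
    fun B _ ζ => (exists_isNormalForm ζ).imp fun _ h => ⟨h.1, h.2 B⟩⟩

/-- (i) every fPCL formula over a finite set of ports `P` has an
equivalent normal form (equivalence over every De Morgan algebra); (ii) over any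
Kleene algebra `K`, every fPCL formula has a `K`-equivalent normal form;
(iii) over any Boolean algebra `B`, every fPCL formula has a `B`-equivalent
normal form. -/
theorem fpcl_normal_form {P : Type} [Fintype P] :
    (∀ ζ : fPCL P, ∃ ζ' : fPCL P, IsNormalForm ζ' ∧ pclEquiv ζ ζ') ∧
    (∀ (K : Type) [KleeneAlg K], ∀ ζ : fPCL P,
      ∃ ζ' : fPCL P, IsNormalForm ζ' ∧ pclEquivAt K ζ ζ') ∧
    (∀ (B : Type) [BooleanDMAlg B], ∀ ζ : fPCL P,
      ∃ ζ' : fPCL P, IsNormalForm ζ' ∧ pclEquivAt B ζ ζ') :=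
  fpcl_normal_form_general
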